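/- arXiv:2409.14998 — 6 statements merged into one kernel-verified Lean document; each statement's English description precedes it below -/
import Mathlib

section
/- If f : X → Y is a bi-p-morphism between co-trees and x ≺ y is an immediate predecessor relation in X (x < y with nothing strictly between), then either f(x) = f(y) or f(x) is an immediate predecessor of f(y) in Y. -/
/-- A bi-p-morphism between co-trees maps an immediate-predecessor pair `x ⋖ y` either to
a single point or to an immediate-predecessor pair. -/
theorem biPMorphism_covBy {X Y : Type*} [PartialOrder X] [OrderTop X]
    [PartialOrder Y] [OrderTop Y]
    (hchainX : ∀ x : X, IsChain (· ≤ ·) (Set.Ici x))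
    (hchainY : ∀ y : Y, IsChain (· ≤ ·) (Set.Ici y))
    (f : X → Y) (hmono : Monotone f)
    (hup : ∀ (x : X) (y : Y), f x ≤ y → ∃ z, x ≤ z ∧ f z = y)
    (hdown : ∀ (x : X) (y : Y), y ≤ f x → ∃ z, z ≤ x ∧ f z = y) :
    ∀ x y : X, x ⋖ y → f x = f y ∨ f x ⋖ f y := by
  intro x y hxy
  rcases eq_or_lt_of_le (hmono hxy.le) with h | h
  · exact Or.inl h
  · right
    refine ⟨h, ?_⟩
    intro w hw hwy
    obtain ⟨z, hxz, hfz⟩ := hup x w hw.le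
    have hcomp := hchainX x (show z ∈ Set.Ici x from hxz) (show y ∈ Set.Ici x from hxy.le)
    by_cases hzy : z = y
    · exact absurd (hfz ▸ hzy ▸ hwy) (lt_irrefl _)
    rcases hcomp hzy with hle | hle
    · have hxz' : x < z := lt_of_le_of_ne hxz (by rintro rfl; exact absurd (hfz ▸ hw) (lt_irrefl _))
      exact hxy.2 hxz' (lt_of_le_of_ne hle hzy)
    · exact absurd (hfz ▸ hmono hle) (not_le_of_gt hwy)
end

section
/- For every positive integer n there is a surjective bi-p-morphism from the (n+1)-comb onto the n-comb with handle, obtained by identifying the two bottom points x₁ and x₁' of the (n+1)-comb. -/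
/-- The `n`-comb: `⟨i, true⟩` is the spine point `xᵢ₊₁`, while `⟨i, false⟩` is the
tooth `xᵢ₊₁'`, a minimal immediate predecessor of `xᵢ₊₁`. -/
structure Comb (n : ℕ) where
  idx : Fin n
  spine : Bool

instance {n : ℕ} : PartialOrder (Comb n) where
  le u v := u = v ∨ (u.idx ≤ v.idx ∧ v.spine = true)
  le_refl u := Or.inl rfl
  le_trans u v w huv hvw := by
    rcases huv with rfl | ⟨h1, h2⟩
    · exact hvw
    · rcases hvw with rfl | ⟨h3, h4⟩
      · exact Or.inr ⟨h1, h2⟩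
      · exact Or.inr ⟨le_trans h1 h3, h4⟩
  le_antisymm u v huv hvu := by
    rcases huv with rfl | ⟨h1, h2⟩
    · rfl
    · rcases hvu with h | ⟨h3, h4⟩
      · exact h.symm
      · obtain ⟨i, b⟩ := u
        obtain ⟨j, c⟩ := v
        have hij : i = j := le_antisymm h1 h3
        have hb : b = true := h4
        have hc : c = true := h2
        subst hij; subst hb; subst hc
        rfl

/-- The `n`-comb with handle: the extra point `handle` is the minimal point `y₀`, an
immediate predecessor of the bottom spine point. -/
inductive HComb (n : ℕ) where
  | handle : HComb n
  | pt : Comb n → HComb n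

namespace HComb

def le' {n : ℕ} : HComb n → HComb n → Prop
  | .handle, .handle => True
  | .handle, .pt c => c.spine = true
  | .pt _, .handle => False
  | .pt c, .pt c' => c ≤ c'

instance {n : ℕ} : PartialOrder (HComb n) where
  le := le'
  le_refl u := by cases u with
    | handle => trivial
    | pt c => exact le_refl c
  le_trans u v w huv hvw := by
    cases u with
    | handle =>
      cases v with
      | handle => exact hvw
      | pt c =>
        cases w with
        | handle => exact absurd hvw id
        | pt c' =>
          rcases (hvw : c ≤ c') with rfl | ⟨_, h⟩
          · exact huv
          · exact h
    | pt c =>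
      cases v with
      | handle => exact absurd huv id
      | pt c' =>
        cases w with
        | handle => exact absurd hvw id
        | pt c'' =>
          show c ≤ c''
          exact le_trans (show c ≤ c' from huv) (show c' ≤ c'' from hvw)
  le_antisymm u v huv hvu := by
    cases u with
    | handle =>
      cases v with
      | handle => rfl
      | pt c => exact absurd hvu id
    | pt c =>
      cases v with
      | handle => exact absurd huv id
      | pt c' => exact congrArg HComb.pt (le_antisymm (huv : c ≤ c') (hvu : c' ≤ c))

end HComb

/-! The map sends `x₁` and `x₁'` to the handle and every other point one level down. Its
back conditions all come from one fact: the preimage of the down-set of a point `c` of the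
`n`-comb is the down-set of its shifted copy, `collapse x ≤ pt c ↔ x ≤ c.succ`. -/

structure IsBiPMorphism {α β : Type*} [Preorder α] [Preorder β] (f : α → β) : Prop where
  monotone : Monotone f
  exists_ge_of_le : ∀ x y, f x ≤ y → ∃ z, x ≤ z ∧ f z = y
  exists_le_of_ge : ∀ x y, y ≤ f x → ∃ z, z ≤ x ∧ f z = y

namespace HComb

variable {n : ℕ}

theorem handle_le_pt {c : Comb n} : handle ≤ pt c ↔ c.spine = true := Iff.rfl

theorem pt_le_pt {c d : Comb n} : pt c ≤ pt d ↔ c ≤ d := Iff.rfl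

theorem le_handle_iff {y : HComb n} : y ≤ handle ↔ y = handle := by
  cases y with
  | handle => exact iff_of_true le_rfl rfl
  | pt c => exact iff_of_false id (by simp)

end HComb

namespace Comb

open HComb

variable {n : ℕ}

theorem le_def {u v : Comb n} : u ≤ v ↔ u = v ∨ u.idx ≤ v.idx ∧ v.spine = true := Iff.rfl

def succ (c : Comb n) : Comb (n + 1) := ⟨c.idx.succ, c.spine⟩

theorem succ_le_succ_iff {c d : Comb n} : c.succ ≤ d.succ ↔ c ≤ d := by
  obtain ⟨i, b⟩ := c
  obtain ⟨j, b'⟩ := d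
  simp [le_def, succ]

@[elab_as_elim]
theorem cases_zero_succ {P : Comb (n + 1) → Prop} (zero : ∀ b, P ⟨0, b⟩)
    (succ : ∀ c : Comb n, P c.succ) (x : Comb (n + 1)) : P x := by
  obtain ⟨i, b⟩ := x
  cases i using Fin.cases with
  | zero => exact zero b
  | succ i => exact succ ⟨i, b⟩

def collapse (x : Comb (n + 1)) : HComb n :=
  Fin.cases handle (fun i => pt ⟨i, x.spine⟩) x.idx

@[simp]
theorem collapse_zero (b : Bool) : collapse (⟨0, b⟩ : Comb (n + 1)) = handle := rfl

@[simp]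
theorem collapse_succ (c : Comb n) : collapse c.succ = pt c := rfl

theorem collapse_eq_handle_of_idx_eq_zero {x : Comb (n + 1)} (hx : x.idx = 0) :
    collapse x = handle := by
  obtain ⟨i, b⟩ := x
  subst hx
  rfl

theorem collapse_le_pt_iff {x : Comb (n + 1)} {c : Comb n} : collapse x ≤ pt c ↔ x ≤ c.succ := by
  induction x using cases_zero_succ with
  | zero b =>
    simp [handle_le_pt, le_def, succ, (Fin.succ_ne_zero c.idx).symm]
  | succ d => rw [collapse_succ, pt_le_pt, succ_le_succ_iff]

theorem monotone_collapse : Monotone (collapse : Comb (n + 1) → HComb n) := by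
  intro x x' hle
  induction x' using cases_zero_succ with
  | zero b =>
    have hx : x.idx = 0 := by
      rcases le_def.1 hle with rfl | ⟨hi, -⟩
      exacts [rfl, Fin.le_zero_iff.1 hi]
    rw [collapse_eq_handle_of_idx_eq_zero hx, collapse_zero]
  | succ c => exact collapse_le_pt_iff.2 hle

theorem isBiPMorphism_collapse : IsBiPMorphism (collapse : Comb (n + 1) → HComb n) where
  monotone := monotone_collapse
  exists_ge_of_le x y hle := by
    cases y with
    | handle => exact ⟨x, le_rfl, le_handle_iff.1 hle⟩
    | pt c => exact ⟨c.succ, collapse_le_pt_iff.1 hle, collapse_succ c⟩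
  exists_le_of_ge x y hle := by
    induction x using cases_zero_succ with
    | zero b => exact ⟨⟨0, b⟩, le_rfl, (le_handle_iff.1 hle).symm⟩
    | succ d =>
      rw [collapse_succ] at hle
      cases y with
      | handle => exact ⟨⟨0, true⟩, collapse_le_pt_iff.1 hle, collapse_zero true⟩
      | pt c => exact ⟨c.succ, succ_le_succ_iff.2 (pt_le_pt.1 hle), collapse_succ c⟩

theorem collapse_surjective : Function.Surjective (collapse : Comb (n + 1) → HComb n)
  | handle => ⟨⟨0, true⟩, rfl⟩
  | pt c => ⟨c.succ, rfl⟩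

end Comb

theorem comb_to_hcomb_surjective_biPMorphism_general (n : ℕ) :
    ∃ f : Comb (n + 1) → HComb n,
      Monotone f ∧
      (∀ (x : Comb (n + 1)) (y : HComb n), f x ≤ y → ∃ z, x ≤ z ∧ f z = y) ∧
      (∀ (x : Comb (n + 1)) (y : HComb n), y ≤ f x → ∃ z, z ≤ x ∧ f z = y) ∧
      Function.Surjective f ∧
      f ⟨0, true⟩ = f ⟨0, false⟩ :=
  have hf := Comb.isBiPMorphism_collapse (n := n)
  ⟨Comb.collapse, hf.monotone, hf.exists_ge_of_le, hf.exists_le_of_ge, Comb.collapse_surjective, rfl⟩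

/-- For every positive integer `n` there is a surjective bi-p-morphism from the
`(n+1)`-comb onto the `n`-comb with handle, identifying the two bottom points
`x₁` and `x₁'`. -/
theorem comb_to_hcomb_surjective_biPMorphism (n : ℕ) (hn : 0 < n) :
    ∃ f : Comb (n + 1) → HComb n,
      Monotone f ∧
      (∀ (x : Comb (n + 1)) (y : HComb n), f x ≤ y → ∃ z, x ≤ z ∧ f z = y) ∧
      (∀ (x : Comb (n + 1)) (y : HComb n), y ≤ f x → ∃ z, z ≤ x ∧ f z = y) ∧
      Function.Surjective f ∧
      f ⟨0, true⟩ = f ⟨0, false⟩ :=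
  comb_to_hcomb_surjective_biPMorphism_general n
end

section
/- There is no surjective bi-p-morphism from any finite comb C_n onto the 3-element chain F₁ = {c < b < a}. -/
/-- There is no surjective bi-p-morphism from any finite comb `C_n` onto the
three-element chain `F₁ = {c < b < a}` (encoded as `Fin 3`). -/
theorem no_surjective_biPMorphism_comb_to_chain3 (n : ℕ) (hn : 0 < n) :
    ¬ ∃ f : Comb n → Fin 3,
        Monotone f ∧
        (∀ (x : Comb n) (y : Fin 3), f x ≤ y → ∃ z, x ≤ z ∧ f z = y) ∧
        (∀ (x : Comb n) (y : Fin 3), y ≤ f x → ∃ z, z ≤ x ∧ f z = y) ∧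
        Function.Surjective f := by
  rintro ⟨f, hmono, hup, hdown, hsurj⟩
  -- every tooth maps to 0, since teeth are minimal
  have hteeth : ∀ i : Fin n, f ⟨i, false⟩ = 0 := by
    intro i
    obtain ⟨z, hz, hfz⟩ := hdown ⟨i, false⟩ 0 (Fin.zero_le _)
    rcases hz with rfl | ⟨_, h⟩
    · exact hfz
    · simp at h
  obtain ⟨x, hx⟩ := hsurj 2
  obtain ⟨j, b⟩ := x
  cases b with
  | false => rw [hteeth] at hx; exact absurd hx (by decide)
  | true =>
    obtain ⟨z, hz, hfz⟩ := hup ⟨j, false⟩ 1 (by rw [hteeth]; decide)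
    rcases hz with rfl | ⟨hle, hsp⟩
    · rw [hteeth] at hfz; exact absurd hfz (by decide)
    · obtain ⟨k, c⟩ := z
      have hlt : (⟨j, true⟩ : Comb n) ≤ ⟨k, c⟩ := Or.inr ⟨hle, hsp⟩
      have := hmono hlt
      rw [hx, hfz] at this
      exact absurd this (by decide)
end

section
/- In a poset X such that nonminimal points of X are pairwise comparable, and in which every principal upset is a chain, if there is a minimal element m with X = (strict upset of m) ∪ min(X) (disjoint), then every minimal element y distinct from m has a unique immediate successor, and that immediate successor lies strictly above m, provided every nonempty chain of the form ↑m ∩ ↑y has a least element. -/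
/-- In a co-tree `X` whose nonminimal points are pairwise comparable, with a minimal
element `m` such that `X` is the disjoint union of the strict upset of `m` and the set
of minimal points, and in which every nonempty set of the form `↑m ∩ ↑y` has a least
element, every minimal element `y ≠ m` has a unique immediate successor, and every
immediate successor of `y` lies strictly above `m`. -/
theorem minimal_has_unique_immediate_successor {X : Type*} [PartialOrder X] [OrderTop X]
    (hchain : ∀ x : X, IsChain (· ≤ ·) (Set.Ici x))
    (hcomp : ∀ x y : X, ¬ IsMin x → ¬ IsMin y → x ≤ y ∨ y ≤ x)
    (m : X) (hm : IsMin m)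
    (hcover : ∀ x : X, m < x ∨ IsMin x)
    (hdisj : ∀ x : X, ¬ (m < x ∧ IsMin x))
    (hleast : ∀ y : X, (Set.Ici m ∩ Set.Ici y).Nonempty →
      ∃ z ∈ Set.Ici m ∩ Set.Ici y, ∀ w ∈ Set.Ici m ∩ Set.Ici y, z ≤ w) :
    ∀ y : X, IsMin y → y ≠ m → (∃! x : X, y ⋖ x) ∧ (∀ x : X, y ⋖ x → m < x) := by
  intro y hy hym
  obtain ⟨z, ⟨hmz, hyz⟩, hzle⟩ := hleast y ⟨⊤, le_top, le_top⟩
  have hzy : z ≠ y := by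
    rintro rfl
    exact hym (le_antisymm (hy hmz) hmz)
  have hylt : y < z := lt_of_le_of_ne hyz (Ne.symm hzy)
  -- z covers y
  have hcov : y ⋖ z := by
    refine ⟨hylt, ?_⟩
    intro w hyw hwz
    have hwmin : ¬ IsMin w := fun h => hyw.ne' (le_antisymm (h hyw.le) hyw.le)
    have hmw : m < w := (hcover w).resolve_right hwmin
    exact absurd (hzle w ⟨hmw.le, hyw.le⟩) (not_le_of_gt hwz)
  have hmltz : m < z := lt_of_le_of_ne hmz (by rintro rfl; exact hym (le_antisymm hyz (hm hyz)))
  have huniq : ∀ x : X, y ⋖ x → x = z := by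
    intro x hx
    have hxmin : ¬ IsMin x := fun h => hx.1.ne' (le_antisymm (h hx.1.le) hx.1.le)
    have hmx : m < x := (hcover x).resolve_right hxmin
    have hzx : z ≤ x := hzle x ⟨hmx.le, hx.1.le⟩
    rcases eq_or_lt_of_le hzx with h | h
    · exact h.symm
    · exact absurd h (hx.2 hylt)
  refine ⟨⟨z, hcov, huniq⟩, fun x hx => ?_⟩
  rw [huniq x hx]; exact hmltz
end

section
/- Contrapositive structure lemma for finite co-trees: if X is a finite co-tree such that no point has three or more immediate predecessors, every chain in X has length at most |X|, and X is not a comb or an hcomb, then either F₀ order embeds into X, or there is a surjective bi-p-morphism from X onto one of F₁, F₂. Concretely: if the co-root r of X has a unique immediate predecessor y and y is not minimal, then the map sending ↑r to a, {y} to b, and everything else to c is a surjective bi-p-morphism onto the 3-chain F₁ = {c < b < a}. -/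
/-- If the co-root `⊤` of a finite co-tree has a unique immediate predecessor `y`, and
`y` is not minimal, then the map sending `⊤` to `a = 2`, `y` to `b = 1`, and everything
else to `c = 0` is a surjective bi-p-morphism onto the three-element chain
`F₁ = {c < b < a}` (encoded as `Fin 3`). -/
theorem cotree_unique_copoint_biPMorphism_to_chain3 {X : Type*} [PartialOrder X]
    [OrderTop X] [Fintype X] (hchain : ∀ x : X, IsChain (· ≤ ·) (Set.Ici x))
    (y : X) (hy : y ⋖ ⊤) (huniq : ∀ z : X, z ⋖ ⊤ → z = y) (hymin : ¬ IsMin y)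
    (f : X → Fin 3)
    (hftop : f ⊤ = 2) (hfy : f y = 1) (hfc : ∀ z : X, z ≠ ⊤ → z ≠ y → f z = 0) :
    Monotone f ∧
      (∀ (u : X) (w : Fin 3), f u ≤ w → ∃ z, u ≤ z ∧ f z = w) ∧
      (∀ (u : X) (w : Fin 3), w ≤ f u → ∃ z, z ≤ u ∧ f z = w) ∧
      Function.Surjective f := by
  -- every element other than ⊤ lies below y
  have hley : ∀ x : X, x ≠ ⊤ → x ≤ y := by
    intro x hx
    obtain ⟨z, hxz, hz⟩ := exists_le_covBy_of_lt (hx.lt_top)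
    exact (huniq z hz) ▸ hxz
  -- element strictly below y
  obtain ⟨v, hv⟩ := not_isMin_iff.mp hymin
  have hvney : v ≠ y := ne_of_lt hv
  have hvnetop : v ≠ ⊤ := by
    intro h; exact absurd (h ▸ hv) (not_lt_of_ge le_top)
  have hfv : f v = 0 := hfc v hvnetop hvney
  have hfyne : ∀ u : X, f u = 2 → u = ⊤ := by
    intro u hu
    by_contra h
    rcases eq_or_ne u y with rfl | h2
    · rw [hfy] at hu; exact absurd hu (by decide)
    · rw [hfc u h h2] at hu; exact absurd hu (by decide)
  have hf1 : ∀ u : X, (1 : Fin 3) ≤ f u → y ≤ u := by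
    intro u hu
    rcases eq_or_ne u ⊤ with rfl | h
    · exact le_top
    rcases eq_or_ne u y with rfl | h2
    · exact le_rfl
    · rw [hfc u h h2] at hu; exact absurd hu (by decide)
  refine ⟨?_, ?_, ?_, ?_⟩
  · -- Monotone
    intro s t hst
    rcases eq_or_ne s ⊤ with rfl | hs
    · rw [le_antisymm le_top hst]
    rcases eq_or_ne t ⊤ with rfl | ht
    · rw [hftop]; omega
    rcases eq_or_ne s y with hs2 | hs2
    · have : t = s := le_antisymm ((hley t ht).trans hs2.symm.le) hst
      rw [this]
    · rw [hfc s hs hs2]; exact Fin.zero_le _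
  · -- forward
    intro u w hw
    match w with
    | 2 => exact ⟨⊤, le_top, hftop⟩
    | 1 =>
      have hu : u ≠ ⊤ := fun h => by rw [h, hftop] at hw; exact absurd hw (by decide)
      exact ⟨y, hley u hu, hfy⟩
    | 0 =>
      have : f u = 0 := le_antisymm hw (Fin.zero_le _)
      exact ⟨u, le_rfl, this⟩
  · -- backward
    intro u w hw
    match w with
    | 0 =>
      rcases eq_or_ne u ⊤ with rfl | h
      · exact ⟨v, le_top, hfv⟩
      rcases eq_or_ne u y with rfl | h2
      · exact ⟨v, hv.le, hfv⟩
      · exact ⟨u, le_rfl, hfc u h h2⟩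
    | 1 => exact ⟨y, hf1 u hw, hfy⟩
    | 2 =>
      have : f u = 2 := le_antisymm (by omega) hw
      exact ⟨u, le_rfl, this⟩
  · -- surjective
    intro w
    match w with
    | 0 => exact ⟨v, hfv⟩
    | 1 => exact ⟨y, hfy⟩
    | 2 => exact ⟨⊤, hftop⟩
end

section
/- Every finite co-tree X of depth d in which every point of depth less than d−1 is either minimal or has exactly two immediate predecessors exactly one of which is minimal, and in which the unique point of depth d−1 on the spine has exactly one immediate predecessor, is order isomorphic to the (d−1)-comb. -/
lemma Comb.le_def_s15 {n : ℕ} {u v : Comb n} :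
    u ≤ v ↔ (u = v ∨ (u.idx ≤ v.idx ∧ v.spine = true)) := Iff.rfl

section CotreeAux

variable {X : Type*} [PartialOrder X] [Fintype X]

lemma cotree_depth_mono {x y : X} (h : x ≤ y) : (Set.Ici y).ncard ≤ (Set.Ici x).ncard :=
  Set.ncard_le_ncard (Set.Ici_subset_Ici.mpr h) (Set.toFinite _)

lemma cotree_depth_strictMono {x y : X} (h : x < y) :
    (Set.Ici y).ncard < (Set.Ici x).ncard := by
  refine Set.ncard_lt_ncard ?_ (Set.toFinite _)
  rw [Set.ssubset_iff_of_subset (Set.Ici_subset_Ici.mpr h.le)]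
  exact ⟨x, Set.self_mem_Ici, fun hx => absurd (Set.mem_Ici.mp hx) h.not_ge⟩

lemma cotree_covBy_ncard (hchain : ∀ x : X, IsChain (· ≤ ·) (Set.Ici x)) {z x : X}
    (h : z ⋖ x) : (Set.Ici z).ncard = (Set.Ici x).ncard + 1 := by
  have hins : Set.Ici z = insert z (Set.Ici x) := by
    ext u
    simp only [Set.mem_Ici, Set.mem_insert_iff]
    constructor
    · intro hu
      rcases eq_or_ne u z with rfl | hne
      · exact Or.inl rfl
      · right
        rcases eq_or_ne u x with rfl | hux
        · exact le_rfl
        · rcases hchain z (Set.mem_Ici.mpr hu) (Set.mem_Ici.mpr h.1.le) hux with h1 | h1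
          · exact absurd (h1.lt_of_ne hux) (h.2 (hu.lt_of_ne (Ne.symm hne)))
          · exact h1
    · rintro (rfl | hu)
      · exact le_rfl
      · exact le_trans h.1.le hu
  rw [hins, Set.ncard_insert_of_notMem (fun hz => absurd (Set.mem_Ici.mp hz) h.1.not_ge) (Set.toFinite _)]

end CotreeAux

/-- A finite co-tree of depth `d ≥ 2` in which every point of depth less than `d - 1` is
either minimal or has exactly two immediate predecessors exactly one of which is
minimal, and in which every nonminimal point of depth `d - 1` has exactly one immediate
predecessor, is order isomorphic to the `(d-1)`-comb. -/
theorem cotree_isomorphic_to_comb {X : Type*} [PartialOrder X] [OrderTop X] [Fintype X]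
    (hchain : ∀ x : X, IsChain (· ≤ ·) (Set.Ici x))
    (d : ℕ) (hd2 : 2 ≤ d)
    (hdepth : ∀ x : X, (Set.Ici x).ncard ≤ d)
    (hdepth' : ∃ x : X, (Set.Ici x).ncard = d)
    (hlow : ∀ x : X, (Set.Ici x).ncard < d - 1 →
      IsMin x ∨ ∃ z w : X, z ≠ w ∧ z ⋖ x ∧ w ⋖ x ∧ (∀ u : X, u ⋖ x → u = z ∨ u = w) ∧
        IsMin z ∧ ¬ IsMin w)
    (hspine : ∀ x : X, (Set.Ici x).ncard = d - 1 → ¬ IsMin x → ∃! z : X, z ⋖ x) :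
    Nonempty (X ≃o Comb (d - 1)) := by
  classical
  have Dmono : ∀ {x y : X}, x ≤ y → (Set.Ici y).ncard ≤ (Set.Ici x).ncard :=
    fun h => cotree_depth_mono h
  have Dstrict : ∀ {x y : X}, x < y → (Set.Ici y).ncard < (Set.Ici x).ncard :=
    fun h => cotree_depth_strictMono h
  have Dcov : ∀ {z x : X}, z ⋖ x → (Set.Ici z).ncard = (Set.Ici x).ncard + 1 :=
    fun h => cotree_covBy_ncard hchain h
  have Dtop : (Set.Ici (⊤ : X)).ncard = 1 := by
    rw [Set.Ici_top, Set.ncard_singleton]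
  have Deq1 : ∀ x : X, (Set.Ici x).ncard = 1 → x = ⊤ := by
    intro x hx
    by_contra hne
    have h1 := Dstrict (lt_top_iff_ne_top.mpr hne)
    omega
  have htopnm : ¬ IsMin (⊤ : X) := by
    obtain ⟨x0, hx0⟩ := hdepth'
    intro hmin
    have hxeq : x0 = ⊤ := le_antisymm le_top (hmin le_top)
    rw [hxeq, Dtop] at hx0
    omega
  have hnm_le : ∀ x : X, ¬ IsMin x → (Set.Ici x).ncard ≤ d - 1 := by
    intro x hx
    obtain ⟨z, hz⟩ := exists_covBy_of_wellFoundedGT hx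
    have h1 := Dcov hz
    have h2 := hdepth z
    omega
  have hmin_ge : ∀ x : X, IsMin x → 2 ≤ (Set.Ici x).ncard := by
    intro x hx
    have hne : x ≠ ⊤ := by rintro rfl; exact htopnm hx
    have h1 := Dstrict (lt_top_iff_ne_top.mpr hne)
    omega
  -- the main induction: unique nonminimal element at each depth `k ≤ d - 1`,
  -- lying above every point of "effective depth" at least `k`.
  have hL : ∀ k, 1 ≤ k → k ≤ d - 1 →
      ∃ s : X, ¬ IsMin s ∧ (Set.Ici s).ncard = k ∧
        (∀ x : X, ¬ IsMin x → (Set.Ici x).ncard = k → x = s) ∧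
        (∀ x : X, (¬ IsMin x ∧ k ≤ (Set.Ici x).ncard) ∨
          (IsMin x ∧ k + 1 ≤ (Set.Ici x).ncard) → x ≤ s) := by
    intro k hk1
    induction k, hk1 using Nat.le_induction with
    | base =>
      intro _
      refine ⟨⊤, htopnm, Dtop, fun x _ hx => Deq1 x hx, fun x _ => le_top⟩
    | succ k hk IH =>
      intro hk2
      obtain ⟨s, hsnm, hsD, hsu, hsc⟩ := IH (by omega)
      rcases hlow s (by omega) with h | ⟨z, w, hzw, hzc, hwc, hcov, hzmin, hwnm⟩
      · exact absurd h hsnm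
      have hzD : (Set.Ici z).ncard = k + 1 := by rw [Dcov hzc, hsD]
      have hwD : (Set.Ici w).ncard = k + 1 := by rw [Dcov hwc, hsD]
      have key : ∀ x : X, (¬ IsMin x ∧ k + 1 ≤ (Set.Ici x).ncard) ∨
          (IsMin x ∧ k + 1 + 1 ≤ (Set.Ici x).ncard) → x ≤ w := by
        intro x hx
        have hxs : x ≤ s := by
          refine hsc x ?_
          rcases hx with ⟨h1, h2⟩ | ⟨h1, h2⟩
          · exact Or.inl ⟨h1, by omega⟩
          · exact Or.inr ⟨h1, by omega⟩
        have hxlt : x < s := by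
          refine lt_of_le_of_ne hxs ?_
          rintro rfl
          rcases hx with ⟨_, h2⟩ | ⟨_, h2⟩ <;> omega
        obtain ⟨c, hxc, hcs⟩ := exists_le_covBy_of_lt hxlt
        rcases hcov c hcs with rfl | rfl
        · -- c = z, the minimal cover: impossible
          have hxz : x = c := le_antisymm hxc (hzmin hxc)
          rcases hx with ⟨h1, _⟩ | ⟨_, h2⟩
          · exact absurd (hxz ▸ hzmin) h1
          · rw [hxz] at h2; omega
        · exact hxc
      refine ⟨w, hwnm, hwD, ?_, key⟩
      intro x hxnm hxD
      have hxw : x ≤ w := key x (Or.inl ⟨hxnm, by omega⟩)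
      rcases eq_or_lt_of_le hxw with h | h
      · exact h
      · have := Dstrict h; omega
  -- unique minimal element at each depth `2 ≤ k ≤ d`.
  have hM : ∀ k, 2 ≤ k → k ≤ d →
      ∃ m : X, IsMin m ∧ (Set.Ici m).ncard = k ∧
        (∀ x : X, IsMin x → (Set.Ici x).ncard = k → x = m) := by
    intro k hk2 hkd
    obtain ⟨s, hsnm, hsD, hsu, hsc⟩ := hL (k - 1) (by omega) (by omega)
    have cover_above : ∀ x : X, IsMin x → (Set.Ici x).ncard = k → x ⋖ s := by
      intro x hxmin hxD
      have hxne : x ≠ ⊤ := by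
        intro h; rw [h, Dtop] at hxD; omega
      have hxmax : ¬ IsMax x := fun hmax => hxne (top_unique (hmax le_top))
      obtain ⟨y, hxy⟩ := exists_covBy_of_wellFoundedLT hxmax
      have hynm : ¬ IsMin y := fun hymin =>
        absurd (hymin hxy.1.le) hxy.1.not_ge
      have hyD : (Set.Ici y).ncard = k - 1 := by
        have := Dcov hxy; omega
      have := hsu y hynm hyD
      rwa [this] at hxy
    by_cases hk : k ≤ d - 1
    · rcases hlow s (by omega) with h | ⟨z, w, hzw, hzc, hwc, hcov, hzmin, hwnm⟩
      · exact absurd h hsnm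
      refine ⟨z, hzmin, by rw [Dcov hzc, hsD]; omega, ?_⟩
      intro x hxmin hxD
      rcases hcov x (cover_above x hxmin hxD) with h | h
      · exact h
      · rw [h] at hxmin; exact absurd hxmin hwnm
    · obtain ⟨z, hzc, hzu⟩ := hspine s (by omega) hsnm
      have hzD : (Set.Ici z).ncard = k := by
        have := Dcov hzc; omega
      have hzmin : IsMin z := by
        by_contra h
        have := hnm_le z h
        omega
      exact ⟨z, hzmin, hzD, fun x hxmin hxD => hzu x (cover_above x hxmin hxD)⟩
  choose S hS1 hS2 hS3 hS4 using hL
  choose M hM1 hM2 hM3 using hM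
  -- comparison lemmas
  have SS : ∀ a b pa qa pb qb, (S a pa qa ≤ S b pb qb) ↔ b ≤ a := by
    intro a b pa qa pb qb
    constructor
    · intro h
      have h1 := Dmono h
      rw [hS2 a pa qa, hS2 b pb qb] at h1
      exact h1
    · intro h
      exact hS4 b pb qb _ (Or.inl ⟨hS1 a pa qa, by rw [hS2 a pa qa]; exact h⟩)
  have MS : ∀ a b pa qa pb qb, (M a pa qa ≤ S b pb qb) ↔ b + 1 ≤ a := by
    intro a b pa qa pb qb
    constructor
    · intro h
      have hne : M a pa qa ≠ S b pb qb := by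
        intro he
        exact absurd (he ▸ hM1 a pa qa) (hS1 b pb qb)
      have h1 := Dstrict (lt_of_le_of_ne h hne)
      rw [hS2 b pb qb, hM2 a pa qa] at h1
      omega
    · intro h
      exact hS4 b pb qb _ (Or.inr ⟨hM1 a pa qa, by rw [hM2 a pa qa]; omega⟩)
  have SM : ∀ a b pa qa pb qb, ¬ (S a pa qa ≤ M b pb qb) := by
    intro a b pa qa pb qb h
    have he := le_antisymm h (hM1 b pb qb h)
    exact absurd (he ▸ hM1 b pb qb) (hS1 a pa qa)
  have MM : ∀ a b pa qa pb qb, (M a pa qa ≤ M b pb qb) ↔ a = b := by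
    intro a b pa qa pb qb
    constructor
    · intro h
      have he := le_antisymm h (hM1 b pb qb h)
      rw [← hM2 a pa qa, ← hM2 b pb qb, he]
    · rintro rfl; rfl
  -- the isomorphism
  let f : Comb (d - 1) → X := fun u =>
    if h : u.spine = true then
      S (d - 1 - u.idx.val) (by have := u.idx.isLt; omega) (by omega)
    else
      M (d - u.idx.val) (by have := u.idx.isLt; omega) (by omega)
  have hf_true : ∀ (m : ℕ) (hm : m < d - 1) p q,
      f ⟨⟨m, hm⟩, true⟩ = S (d - 1 - m) p q := by
    intro m hm p q; rfl
  have hf_false : ∀ (m : ℕ) (hm : m < d - 1) p q,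
      f ⟨⟨m, hm⟩, false⟩ = M (d - m) p q := by
    intro m hm p q; rfl
  have hrel : ∀ u v : Comb (d - 1), f u ≤ f v ↔ u ≤ v := by
    rintro ⟨⟨i, hi⟩, bi⟩ ⟨⟨j, hj⟩, bj⟩
    rw [Comb.le_def_s15]
    simp only [Comb.mk.injEq, Fin.mk.injEq, Fin.mk_le_mk]
    cases bi <;> cases bj
    · rw [hf_false i hi (by omega) (by omega), hf_false j hj (by omega) (by omega),
        MM (d - i) (d - j)]
      constructor
      · intro h
        exact Or.inl ⟨by omega, rfl⟩
      · rintro (⟨h, -⟩ | ⟨-, h⟩)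
        · omega
        · exact absurd h (by simp)
    · rw [hf_false i hi (by omega) (by omega), hf_true j hj (by omega) (by omega),
        MS (d - i) (d - 1 - j)]
      constructor
      · intro h
        exact Or.inr ⟨by omega, rfl⟩
      · rintro (⟨-, h⟩ | ⟨h, -⟩)
        · exact absurd h (by simp)
        · omega
    · rw [hf_true i hi (by omega) (by omega), hf_false j hj (by omega) (by omega)]
      refine iff_of_false (SM _ _ _ _ _ _) ?_
      rintro (⟨-, h⟩ | ⟨-, h⟩) <;> exact absurd h (by simp)
    · rw [hf_true i hi (by omega) (by omega), hf_true j hj (by omega) (by omega),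
        SS (d - 1 - i) (d - 1 - j)]
      constructor
      · intro h
        exact Or.inr ⟨by omega, rfl⟩
      · rintro (⟨h, -⟩ | ⟨h, -⟩) <;> omega
  have hsurj : Function.Surjective f := by
    intro x
    by_cases hx : IsMin x
    · have h2 := hmin_ge x hx
      have h3 := hdepth x
      refine ⟨⟨⟨d - (Set.Ici x).ncard, by omega⟩, false⟩, ?_⟩
      rw [hf_false (d - (Set.Ici x).ncard) (by omega) (by omega) (by omega)]
      exact (hM3 (d - (d - (Set.Ici x).ncard)) (by omega) (by omega) x hx (by omega)).symm
    · have h1 : 1 ≤ (Set.Ici x).ncard :=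
        Set.ncard_pos (Set.toFinite _) |>.mpr ⟨x, Set.self_mem_Ici⟩
      have h2 := hnm_le x hx
      refine ⟨⟨⟨d - 1 - (Set.Ici x).ncard, by omega⟩, true⟩, ?_⟩
      rw [hf_true (d - 1 - (Set.Ici x).ncard) (by omega) (by omega) (by omega)]
      exact (hS3 (d - 1 - (d - 1 - (Set.Ici x).ncard)) (by omega) (by omega)
        x hx (by omega)).symm
  have hinj : Function.Injective f := by
    intro u v h
    exact le_antisymm ((hrel u v).mp h.le) ((hrel v u).mp h.ge)
  exact ⟨(OrderIso.symm
    { toEquiv := Equiv.ofBijective f ⟨hinj, hsurj⟩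
      map_rel_iff' := fun {u v} => hrel u v })⟩
end
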